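/- arXiv:1710.04618 — 5 statements merged into one kernel-verified Lean document; each statement's English description precedes it below -/
import Mathlib

section
/- Let T : (ℝ^n)^3 → ℝ be a trilinear form symmetric under all permutations of its arguments. Then there exists a unit vector v such that T(v,v,v) = sup over unit vectors e1,e2,e3 of T(e1,e2,e3), and this supremum is nonnegative. -/
open scoped RealInnerProductSpace

/-!
Let `M` be the maximum of `T` on triples of unit vectors. Polarization in the first two slots,
`4 T(a,b,c) = T(a+b,a+b,c) - T(a-b,a-b,c)`, together with `T(x,x,c) ≥ -M ‖x‖²` and the
parallelogram law, shows that if `T(a,b,c) = M` and `a ≠ -b`, then `a` and `b` may both be replaced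
by the unit bisector of `a` and `b`. So `M` is attained at some `(w,w,z)`. For such a pair with
`⟪w,z⟫` maximal, the step applied to `(z,w,w)` gives `(u,u,w)` with `u` the bisector of `z` and
`w`, which is strictly closer to `w` than `z` is unless `z = ±w`; in both cases `T(z,z,z) = M`.
Finally, for such a diagonal maximizer `v`, `T(-v,-v,-v) = -T(v,v,v)` forces `M ≥ 0`.
-/

section Continuity

variable {E F G X : Type*} [NormedAddCommGroup E] [NormedSpace ℝ E] [FiniteDimensional ℝ E]
  [NormedAddCommGroup F] [NormedSpace ℝ F] [FiniteDimensional ℝ F]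
  [NormedAddCommGroup G] [NormedSpace ℝ G] [FiniteDimensional ℝ G] [TopologicalSpace X]

theorem Continuous.linearMap_apply₃ (T : E →ₗ[ℝ] F →ₗ[ℝ] G →ₗ[ℝ] ℝ) {f : X → E} {g : X → F}
    {h : X → G} (hf : Continuous f) (hg : Continuous g) (hh : Continuous h) :
    Continuous fun x ↦ T (f x) (g x) (h x) :=
  ((T.compr₂ LinearMap.toContinuousLinearMap.toLinearMap).toContinuousBilinearMap.continuous₂.comp
    (hf.prodMk hg)).clm_apply hh

end Continuity

section Bilinear

variable {E : Type*} [NormedAddCommGroup E] [InnerProductSpace ℝ E]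

theorem LinearMap.mul_norm_sq_le_apply_self (B : E →ₗ[ℝ] E →ₗ[ℝ] ℝ) {c : ℝ}
    (h : ∀ x, ‖x‖ = 1 → c ≤ B x x) (x : E) : c * ‖x‖ ^ 2 ≤ B x x := by
  rcases eq_or_ne x 0 with rfl | hx
  · simp
  have hunit := h (‖x‖⁻¹ • x) (norm_smul_inv_norm hx)
  have hx' : 0 < ‖x‖ := norm_pos_iff.mpr hx
  simp only [map_smul, LinearMap.smul_apply, smul_eq_mul] at hunit
  calc c * ‖x‖ ^ 2 ≤ ‖x‖⁻¹ * (‖x‖⁻¹ * B x x) * ‖x‖ ^ 2 := by gcongr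
    _ = B x x := by field_simp

theorem LinearMap.mul_norm_add_sq_le_apply_add_self (B : E →ₗ[ℝ] E →ₗ[ℝ] ℝ)
    (hB : ∀ x y, B x y = B y x) {N : ℝ} (hN : ∀ x, ‖x‖ = 1 → -N ≤ B x x) {a b : E}
    (ha : ‖a‖ = 1) (hb : ‖b‖ = 1) (hab : N ≤ B a b) :
    N * ‖a + b‖ ^ 2 ≤ B (a + b) (a + b) := by
  have hpolar : B (a + b) (a + b) = B (a - b) (a - b) + 4 * B a b := by
    simp only [map_add, map_sub, LinearMap.add_apply, LinearMap.sub_apply, hB b a]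
    ring
  have hpar : ‖a + b‖ ^ 2 = 4 - ‖a - b‖ ^ 2 := by
    rw [norm_add_sq_real, norm_sub_sq_real, ha, hb]
    ring
  have hsub := B.mul_norm_sq_le_apply_self hN (a - b)
  rw [hpar, hpolar]
  linarith

theorem eq_of_inner_normalized_add_le {w z : E} (hw : ‖w‖ = 1) (hz : ‖z‖ = 1) (hzw : z + w ≠ 0)
    (h : ⟪‖z + w‖⁻¹ • (z + w), w⟫ ≤ ⟪w, z⟫) : w = z := by
  set r := ‖z + w‖
  set s := ⟪w, z⟫
  have hr : 0 < r := norm_pos_iff.mpr hzw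
  have hr2 : r ^ 2 = 2 + 2 * s := by
    rw [norm_add_sq_real, hw, hz, real_inner_comm]; ring
  have hs1 : s ≤ 1 := by
    simpa [hw, hz] using real_inner_le_norm w z
  have hlhs : ⟪r⁻¹ • (z + w), w⟫ = r⁻¹ * (s + 1) := by
    rw [real_inner_smul_left, inner_add_left, real_inner_comm, real_inner_self_eq_norm_sq, hw]
    ring
  rw [hlhs, inv_mul_le_iff₀ hr] at h
  have hs : 1 ≤ s := by nlinarith
  exact (inner_eq_one_iff_of_norm_eq_one hw hz).mp (le_antisymm hs1 hs)

end Bilinear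

section Trilinear

variable {E : Type*} [NormedAddCommGroup E] [InnerProductSpace ℝ E]
  (T : E →ₗ[ℝ] E →ₗ[ℝ] E →ₗ[ℝ] ℝ)

theorem LinearMap.apply_normalized_add_eq_of_apply_eq (hT : ∀ x y z, T x y z = T y x z) {M : ℝ}
    (hM : ∀ x y z : E, ‖x‖ = 1 → ‖y‖ = 1 → ‖z‖ = 1 → T x y z ≤ M) {a b c : E}
    (ha : ‖a‖ = 1) (hb : ‖b‖ = 1) (hc : ‖c‖ = 1) (habc : T a b c = M) (hab : a + b ≠ 0) :
    T (‖a + b‖⁻¹ • (a + b)) (‖a + b‖⁻¹ • (a + b)) c = M := by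
  have hu : ‖‖a + b‖⁻¹ • (a + b)‖ = 1 := norm_smul_inv_norm hab
  refine le_antisymm (hM _ _ _ hu hu hc) ?_
  have hN : ∀ x, ‖x‖ = 1 → -M ≤ T.compr₂ (LinearMap.applyₗ c) x x := fun x hx ↦ by
    have := hM x x (-c) hx hx (by rwa [norm_neg])
    simp only [map_neg, LinearMap.compr₂_apply, LinearMap.applyₗ_apply_apply] at this ⊢
    linarith
  have key := (T.compr₂ (LinearMap.applyₗ c)).mul_norm_add_sq_le_apply_add_self
    (fun x y ↦ hT x y c) hN ha hb habc.ge
  have hr : 0 < ‖a + b‖ := norm_pos_iff.mpr hab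
  simp only [LinearMap.compr₂_apply, LinearMap.applyₗ_apply_apply] at key
  simp only [map_smul, LinearMap.smul_apply, smul_eq_mul]
  field_simp
  linarith

theorem LinearMap.exists_apply_self_left_eq (hT : ∀ x y z, T x y z = T y x z) {M : ℝ}
    (hM : ∀ x y z : E, ‖x‖ = 1 → ‖y‖ = 1 → ‖z‖ = 1 → T x y z ≤ M) {a b c : E}
    (ha : ‖a‖ = 1) (hb : ‖b‖ = 1) (hc : ‖c‖ = 1) (habc : T a b c = M) :
    ∃ w z : E, ‖w‖ = 1 ∧ ‖z‖ = 1 ∧ T w w z = M := by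
  by_cases hab : a + b = 0
  · obtain rfl : b = -a := eq_neg_of_add_eq_zero_right hab
    exact ⟨a, -c, ha, by rwa [norm_neg], by simpa using habc⟩
  · have hu : ‖‖a + b‖⁻¹ • (a + b)‖ = 1 := norm_smul_inv_norm hab
    exact ⟨_, c, hu, hc, T.apply_normalized_add_eq_of_apply_eq hT hM ha hb hc habc hab⟩

theorem LinearMap.exists_apply_diag_eq [FiniteDimensional ℝ E]
    (hT₁₂ : ∀ x y z, T x y z = T y x z) (hT₂₃ : ∀ x y z, T x y z = T x z y) {M : ℝ}
    (hM : ∀ x y z : E, ‖x‖ = 1 → ‖y‖ = 1 → ‖z‖ = 1 → T x y z ≤ M) {w₀ z₀ : E}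
    (hw₀ : ‖w₀‖ = 1) (hz₀ : ‖z₀‖ = 1) (hM₀ : T w₀ w₀ z₀ = M) :
    ∃ v : E, ‖v‖ = 1 ∧ T v v v = M := by
  set K : Set (E × E) := (Metric.sphere 0 1 ×ˢ Metric.sphere 0 1) ∩ {p | T p.1 p.1 p.2 = M}
  have hK : IsCompact K :=
    ((isCompact_sphere 0 1).prod (isCompact_sphere 0 1)).inter_right <| isClosed_eq
      (continuous_fst.linearMap_apply₃ T continuous_fst continuous_snd) continuous_const
  -- Among the pairs `(w, z)` with `T w w z = M`, take one with `z` as close to `w` as possible.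
  obtain ⟨⟨w, z⟩, ⟨⟨hw, hz⟩, hwz : T w w z = M⟩, hmax⟩ := hK.exists_isMaxOn
    ⟨(w₀, z₀), ⟨mem_sphere_zero_iff_norm.mpr hw₀, mem_sphere_zero_iff_norm.mpr hz₀⟩, hM₀⟩
    (continuous_inner : Continuous fun p : E × E ↦ ⟪p.1, p.2⟫).continuousOn
  simp only [mem_sphere_zero_iff_norm] at hw hz
  by_cases hzw : z + w = 0
  · obtain rfl : z = -w := eq_neg_of_add_eq_zero_left hzw
    exact ⟨-w, hz, by simpa using hwz⟩
  · have hzww : T z w w = M := by rw [hT₁₂, hT₂₃, hwz]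
    have hu : ‖‖z + w‖⁻¹ • (z + w)‖ = 1 := norm_smul_inv_norm hzw
    have huw := T.apply_normalized_add_eq_of_apply_eq hT₁₂ hM hz hw hw hzww hzw
    have hle : ⟪‖z + w‖⁻¹ • (z + w), w⟫ ≤ ⟪w, z⟫ :=
      hmax (show (_, w) ∈ K from
        ⟨⟨mem_sphere_zero_iff_norm.mpr hu, mem_sphere_zero_iff_norm.mpr hw⟩, huw⟩)
    obtain rfl := eq_of_inner_normalized_add_le hw hz hzw hle
    exact ⟨w, hw, hwz⟩

theorem LinearMap.exists_isGreatest_apply_diag [FiniteDimensional ℝ E] [Nontrivial E]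
    (hT₁₂ : ∀ x y z, T x y z = T y x z) (hT₂₃ : ∀ x y z, T x y z = T x z y) :
    ∃ v : E, ‖v‖ = 1 ∧ IsGreatest {r : ℝ | ∃ e₁ e₂ e₃ : E,
      ‖e₁‖ = 1 ∧ ‖e₂‖ = 1 ∧ ‖e₃‖ = 1 ∧ r = T e₁ e₂ e₃} (T v v v) := by
  obtain ⟨e, he⟩ := exists_norm_eq E zero_le_one
  set S : Set (E × E × E) := Metric.sphere 0 1 ×ˢ Metric.sphere 0 1 ×ˢ Metric.sphere 0 1
  have hS : IsCompact S :=
    (isCompact_sphere 0 1).prod ((isCompact_sphere 0 1).prod (isCompact_sphere 0 1))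
  obtain ⟨⟨a, b, c⟩, ⟨ha, hb, hc⟩, hmax⟩ := hS.exists_isMaxOn ⟨(e, e, e), by simp [S, he]⟩
    (continuous_fst.linearMap_apply₃ T (continuous_fst.comp continuous_snd)
      (continuous_snd.comp continuous_snd)).continuousOn
  simp only [mem_sphere_zero_iff_norm] at ha hb hc
  have hM : ∀ x y z : E, ‖x‖ = 1 → ‖y‖ = 1 → ‖z‖ = 1 → T x y z ≤ T a b c :=
    fun x y z hx hy hz ↦ hmax (show (x, y, z) ∈ S by simp [S, hx, hy, hz])
  obtain ⟨w, z, hw, hz, hwz⟩ := T.exists_apply_self_left_eq hT₁₂ hM ha hb hc rfl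
  obtain ⟨v, hv, hvM⟩ := T.exists_apply_diag_eq hT₁₂ hT₂₃ hM hw hz hwz
  refine ⟨v, hv, ⟨v, v, v, hv, hv, hv, rfl⟩, ?_⟩
  rintro r ⟨x, y, z, hx, hy, hz, rfl⟩
  exact hvM ▸ hM x y z hx hy hz

end Trilinear

theorem stmt_0 (n : ℕ) (hn : 1 ≤ n)
    (T : EuclideanSpace ℝ (Fin n) →ₗ[ℝ] EuclideanSpace ℝ (Fin n) →ₗ[ℝ]
      EuclideanSpace ℝ (Fin n) →ₗ[ℝ] ℝ)
    (hsym1 : ∀ x y z, T x y z = T y x z)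
    (hsym2 : ∀ x y z, T x y z = T x z y) :
    ∃ v : EuclideanSpace ℝ (Fin n), ‖v‖ = 1 ∧
      T v v v = sSup {r : ℝ | ∃ e₁ e₂ e₃ : EuclideanSpace ℝ (Fin n),
        ‖e₁‖ = 1 ∧ ‖e₂‖ = 1 ∧ ‖e₃‖ = 1 ∧ r = T e₁ e₂ e₃} ∧
      0 ≤ T v v v := by
  have : Nonempty (Fin n) := ⟨⟨0, hn⟩⟩
  obtain ⟨v, hv, hmax⟩ := T.exists_isGreatest_apply_diag hsym1 hsym2
  have hneg : T (-v) (-v) (-v) ≤ T v v v :=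
    hmax.2 ⟨-v, -v, -v, by simpa using hv, by simpa using hv, by simpa using hv, rfl⟩
  simp only [map_neg, LinearMap.neg_apply, neg_neg] at hneg
  exact ⟨v, hv, hmax.csSup_eq.symm, by linarith⟩
end

section
/- Let T : (ℝ^n)^3 → ℝ be a symmetric trilinear form and let v be a unit vector maximizing T(e,e,e) over unit vectors e. Then for every unit vector a orthogonal to v: T(a,v,v) = 0 and T(v,v,v) ≥ 2·T(v,a,a). -/
/-!
Move along the circle through `v` and `a` by the rational parametrization
`e(t) = ((1 - t²) v + 2t a) / (1 + t²)`. Maximality of `v` then becomes the polynomial inequality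
`(1 - t²)³ A + 6t(1 - t²)² B + 12t²(1 - t²) C + 8t³ D ≤ (1 + t²)³ A` for all real `t`, where
`A = T(v,v,v)`, `B = T(a,v,v)`, `C = T(v,a,a)`, `D = T(a,a,a)`. The difference of the two sides is
`-6B t + (6A - 12C) t² + O(t³)`, so `B ≤ 0` (and `B ≥ 0` on replacing `a` by `-a`), and then
`6A - 12C ≥ 0`.
-/

lemma nonneg_at_zero_of_forall_pos {g : ℝ → ℝ} (hg : ContinuousAt g 0) (h : ∀ t > 0, 0 ≤ g t) :
    0 ≤ g 0 :=
  ge_of_tendsto (hg.tendsto.mono_left nhdsWithin_le_nhds)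
    (eventually_nhdsWithin_of_forall (s := Set.Ioi 0) h)

lemma norm_circle_param {E : Type*} [NormedAddCommGroup E] [InnerProductSpace ℝ E] {v a : E}
    (hv : ‖v‖ = 1) (ha : ‖a‖ = 1) (hav : inner ℝ a v = 0) (t : ℝ) :
    ‖(1 - t ^ 2) • v + (2 * t) • a‖ = 1 + t ^ 2 := by
  refine (sq_eq_sq₀ (norm_nonneg _) (by positivity)).mp ?_
  rw [norm_add_sq_real, real_inner_smul_left, real_inner_smul_right, real_inner_comm, hav,
    norm_smul, norm_smul, hv, ha, Real.norm_eq_abs, Real.norm_eq_abs, mul_pow, mul_pow, sq_abs,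
    sq_abs]
  ring

lemma apply_self_le_mul_norm_pow {E : Type*} [NormedAddCommGroup E] [NormedSpace ℝ E]
    (T : E →ₗ[ℝ] E →ₗ[ℝ] E →ₗ[ℝ] ℝ) {v : E}
    (hmax : ∀ e : E, ‖e‖ = 1 → T e e e ≤ T v v v) (w : E) :
    T w w w ≤ T v v v * ‖w‖ ^ 3 := by
  rcases eq_or_ne w 0 with rfl | hw
  · simp
  have hw' : 0 < ‖w‖ := norm_pos_iff.mpr hw
  have hunit := hmax (‖w‖⁻¹ • w) (by rw [norm_smul, norm_inv, norm_norm, inv_mul_cancel₀ hw'.ne'])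
  have hscale : T (‖w‖⁻¹ • w) (‖w‖⁻¹ • w) (‖w‖⁻¹ • w) = T w w w / ‖w‖ ^ 3 := by
    simp only [map_smul, LinearMap.smul_apply, smul_eq_mul]
    field_simp
  rwa [hscale, div_le_iff₀ (by positivity)] at hunit

lemma apply_smul_add_smul_self {E : Type*} [AddCommGroup E] [Module ℝ E]
    (T : E →ₗ[ℝ] E →ₗ[ℝ] E →ₗ[ℝ] ℝ)
    (hsym1 : ∀ x y z, T x y z = T y x z) (hsym2 : ∀ x y z, T x y z = T x z y)
    (v a : E) (x y : ℝ) :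
    T (x • v + y • a) (x • v + y • a) (x • v + y • a) =
      x ^ 3 * T v v v + 3 * x ^ 2 * y * T a v v + 3 * x * y ^ 2 * T v a a + y ^ 3 * T a a a := by
  have h1 : T v a v = T a v v := hsym1 ..
  have h2 : T v v a = T a v v := by rw [hsym2, hsym1]
  have h3 : T a v a = T v a a := hsym1 ..
  have h4 : T a a v = T v a a := by rw [hsym2, hsym1]
  simp only [map_add, map_smul, LinearMap.add_apply, LinearMap.smul_apply, smul_eq_mul,
    h1, h2, h3, h4]
  ring

section MaximalDirection

variable {E : Type*} [NormedAddCommGroup E] [InnerProductSpace ℝ E]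
  {T : E →ₗ[ℝ] E →ₗ[ℝ] E →ₗ[ℝ] ℝ}
  (hsym1 : ∀ x y z, T x y z = T y x z) (hsym2 : ∀ x y z, T x y z = T x z y)
  {v : E} (hv : ‖v‖ = 1) (hmax : ∀ e : E, ‖e‖ = 1 → T e e e ≤ T v v v)
  {a : E} (ha : ‖a‖ = 1) (hav : inner ℝ a v = 0)

include hsym1 hsym2 hv hmax ha hav

lemma circle_param_ineq (t : ℝ) :
    (1 - t ^ 2) ^ 3 * T v v v + 6 * t * (1 - t ^ 2) ^ 2 * T a v v
      + 12 * t ^ 2 * (1 - t ^ 2) * T v a a + 8 * t ^ 3 * T a a a ≤ (1 + t ^ 2) ^ 3 * T v v v := by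
  have h := apply_self_le_mul_norm_pow T hmax ((1 - t ^ 2) • v + (2 * t) • a)
  rw [apply_smul_add_smul_self T hsym1 hsym2, norm_circle_param hv ha hav] at h
  linarith

lemma apply_left_orthogonal_nonpos : T a v v ≤ 0 := by
  have key := nonneg_at_zero_of_forall_pos
    (g := fun t ↦ (6 * t + 2 * t ^ 5) * T v v v - 6 * (1 - t ^ 2) ^ 2 * T a v v
      - 12 * t * (1 - t ^ 2) * T v a a - 8 * t ^ 2 * T a a a) (by fun_prop) fun t ht ↦ by
    have h := circle_param_ineq hsym1 hsym2 hv hmax ha hav t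
    exact nonneg_of_mul_nonneg_right (by linarith) ht
  norm_num at key
  linarith

lemma two_mul_apply_le_of_apply_eq_zero (hB : T a v v = 0) : 2 * T v a a ≤ T v v v := by
  have key := nonneg_at_zero_of_forall_pos
    (g := fun t ↦ (6 + 2 * t ^ 4) * T v v v - 12 * (1 - t ^ 2) * T v a a - 8 * t * T a a a)
    (by fun_prop) fun t ht ↦ by
    have h := circle_param_ineq hsym1 hsym2 hv hmax ha hav t
    rw [hB] at h
    exact nonneg_of_mul_nonneg_right (by linarith) (pow_pos ht 2)
  norm_num at key
  linarith

end MaximalDirection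

theorem stmt_1 (n : ℕ)
    (T : EuclideanSpace ℝ (Fin n) →ₗ[ℝ] EuclideanSpace ℝ (Fin n) →ₗ[ℝ]
      EuclideanSpace ℝ (Fin n) →ₗ[ℝ] ℝ)
    (hsym1 : ∀ x y z, T x y z = T y x z)
    (hsym2 : ∀ x y z, T x y z = T x z y)
    (v : EuclideanSpace ℝ (Fin n)) (hv : ‖v‖ = 1)
    (hmax : ∀ e : EuclideanSpace ℝ (Fin n), ‖e‖ = 1 → T e e e ≤ T v v v)
    (a : EuclideanSpace ℝ (Fin n)) (ha : ‖a‖ = 1) (hav : (inner ℝ a v : ℝ) = 0) :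
    T a v v = 0 ∧ 2 * T v a a ≤ T v v v := by
  have hB : T a v v = 0 := by
    refine le_antisymm (apply_left_orthogonal_nonpos hsym1 hsym2 hv hmax ha hav) ?_
    have h := apply_left_orthogonal_nonpos hsym1 hsym2 hv hmax (a := -a) (by rwa [norm_neg])
      (by rw [inner_neg_left, hav, neg_zero])
    simpa using h
  exact ⟨hB, two_mul_apply_le_of_apply_eq_zero hsym1 hsym2 hv hmax ha hav hB⟩
end

section
/- Let φ(t) = log(2 cosh²(t/2)) and Φ(x) = Σ_{i=1}^n φ(x_i) on ℝ^n. Then det D²Φ = e^{-Φ} and ∇Φ(ℝ^n) = (-1,1)^n. -/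
/-!
`Φ` is separable, so its Hessian is diagonal with entries `φ''(xᵢ)`. Here `φ' t = tanh (t/2)` and
`φ'' t = 1 / (2 cosh² (t/2)) = exp (-φ t)`, so `det D²Φ = ∏ exp (-φ xᵢ) = exp (-Φ)`, and
`∇Φ x = (tanh (xᵢ/2))ᵢ` ranges over `(-1, 1)ⁿ` because `tanh` is a bijection `ℝ → (-1, 1)`.
-/

open Real Set

namespace Real

theorem hasDerivAt_tanh (x : ℝ) : HasDerivAt tanh (cosh x ^ 2)⁻¹ x := by
  rw [show tanh = sinh / cosh from funext tanh_eq_sinh_div_cosh]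
  refine ((hasDerivAt_sinh x).div (hasDerivAt_cosh x) (cosh_pos x).ne').congr_deriv ?_
  have := cosh_sq_sub_sinh_sq x
  field_simp
  linarith

theorem range_tanh : range tanh = Ioo (-1) 1 := by
  rw [← image_univ]
  exact tanh_bijOn.image_eq

end Real

section SeparableFunction

variable {ι : Type*} [Fintype ι] {f f' f'' : ℝ → ℝ}

local notation "pr" i => (ContinuousLinearMap.proj i : (ι → ℝ) →L[ℝ] ℝ)

theorem hasFDerivAt_sum_comp_apply (hf : ∀ t, HasDerivAt f (f' t) t) (x : ι → ℝ) :
    HasFDerivAt (fun x : ι → ℝ => ∑ i, f (x i)) (∑ i, f' (x i) • pr i) x :=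
  HasFDerivAt.fun_sum fun i _ => (hf (x i)).comp_hasFDerivAt x (pr i).hasFDerivAt

theorem iteratedFDeriv_two_sum_comp_apply (hf : ∀ t, HasDerivAt f (f' t) t)
    (hf' : ∀ t, HasDerivAt f' (f'' t) t) (x u v : ι → ℝ) :
    iteratedFDeriv ℝ 2 (fun x : ι → ℝ => ∑ i, f (x i)) x ![u, v] = ∑ i, f'' (x i) * u i * v i := by
  have hderiv : fderiv ℝ (fun x : ι → ℝ => ∑ i, f (x i))
      = fun x => ∑ i, f' (x i) • pr i :=
    funext fun x => (hasFDerivAt_sum_comp_apply hf x).fderiv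
  have hsecond : HasFDerivAt (fun x : ι → ℝ => ∑ i, f' (x i) • pr i)
      (∑ i, (f'' (x i) • pr i).smulRight (pr i)) x :=
    HasFDerivAt.fun_sum fun i _ =>
      ((hf' (x i)).comp_hasFDerivAt x (pr i).hasFDerivAt).smul_const (pr i)
  rw [iteratedFDeriv_two_apply, hderiv, hsecond.fderiv]
  simp [mul_comm, mul_left_comm]

theorem hessian_sum_comp_apply_eq_diagonal [DecidableEq ι] (hf : ∀ t, HasDerivAt f (f' t) t)
    (hf' : ∀ t, HasDerivAt f' (f'' t) t) (x : ι → ℝ) :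
    Matrix.of (fun i j => iteratedFDeriv ℝ 2 (fun x : ι → ℝ => ∑ i, f (x i)) x
      ![Pi.single i 1, Pi.single j 1]) = Matrix.diagonal fun i => f'' (x i) := by
  ext i j
  rw [Matrix.of_apply, iteratedFDeriv_two_sum_comp_apply hf hf', Matrix.diagonal_apply]
  rcases eq_or_ne i j with rfl | hij
  · simp [Pi.single_apply]
  · simp [Pi.single_apply, hij, hij.symm]

end SeparableFunction

theorem hasDerivAt_log_two_mul_cosh_half_sq (t : ℝ) :
    HasDerivAt (fun t => log (2 * cosh (t / 2) ^ 2)) (tanh (t / 2)) t := by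
  have hcosh := ((hasDerivAt_id' t).div_const 2).cosh
  refine (((hcosh.fun_pow 2).const_mul 2).log (by positivity)).congr_deriv ?_
  rw [tanh_eq_sinh_div_cosh]
  field_simp
  ring

theorem hasDerivAt_tanh_half (t : ℝ) :
    HasDerivAt (fun t => tanh (t / 2)) (exp (-log (2 * cosh (t / 2) ^ 2))) t := by
  refine ((hasDerivAt_tanh (t / 2)).comp t ((hasDerivAt_id' t).div_const 2)).congr_deriv ?_
  rw [exp_neg, exp_log (by positivity)]
  ring

theorem stmt_4 (n : ℕ) :
    let φ : ℝ → ℝ := fun t => Real.log (2 * Real.cosh (t / 2) ^ 2)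
    let Φ : (Fin n → ℝ) → ℝ := fun x => ∑ i, φ (x i)
    (∀ x : Fin n → ℝ,
      (Matrix.of fun i j : Fin n =>
        iteratedFDeriv ℝ 2 Φ x ![Pi.single i 1, Pi.single j 1]).det
        = Real.exp (-Φ x)) ∧
    Set.range (fun x : Fin n → ℝ => fun i => deriv φ (x i))
      = Set.univ.pi (fun _ : Fin n => Set.Ioo (-1 : ℝ) 1) := by
  intro φ Φ
  constructor
  · intro x
    rw [hessian_sum_comp_apply_eq_diagonal hasDerivAt_log_two_mul_cosh_half_sq
      hasDerivAt_tanh_half, Matrix.det_diagonal, ← Finset.sum_neg_distrib, exp_sum]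
  · have hderiv : deriv φ = fun t => tanh (t / 2) :=
      funext fun t => (hasDerivAt_log_two_mul_cosh_half_sq t).deriv
    have hrange : range (fun t : ℝ => tanh (t / 2)) = Ioo (-1) 1 := by
      rw [← range_tanh]
      exact Function.Surjective.range_comp (fun y => ⟨2 * y, by ring⟩) tanh
    rw [hderiv, ← hrange]
    exact range_piMap fun _ t => tanh (t / 2)
end

section
/- For the simplex potential Φ(x) = (n+1) log(1 + Σ e^{x_i}) − Σ x_i, the third derivatives satisfy Φ_{ijk} = Φ_{ik}δ_{ij} − Φ_{ik}(Φ_j+1)/(n+1) − Φ_{jk}(Φ_i+1)/(n+1). -/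
/-!
With the weights `p i = exp (x i) / (1 + ∑ j, exp (x j))` we have `Φ_i + 1 = (n + 1) p_i`, and
since `log p_k = x_k - log (1 + ∑ exp x)`, also `∂_j p_k = p_k (δ_jk - p_j)`. Hence the second and
third derivatives of `Φ` are explicit polynomials in `p`, and the claimed identity reduces to the
Kronecker identities `δ_ik δ_jk = δ_ik δ_ij` and `p_j δ_ij = p_i δ_ij`.
-/

open Real

namespace SimplexPotential

variable {n : ℕ}

noncomputable def expSum (x : Fin n → ℝ) : ℝ := 1 + ∑ i, exp (x i)

noncomputable def weight (x : Fin n → ℝ) (j : Fin n) : ℝ := exp (x j) / expSum x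

noncomputable def potential (n : ℕ) (x : Fin n → ℝ) : ℝ :=
  (n + 1) * log (expSum x) - ∑ i, x i

lemma expSum_pos (x : Fin n → ℝ) : 0 < expSum x := by
  unfold expSum; positivity

lemma hasFDerivAt_log_expSum (x : Fin n → ℝ) :
    HasFDerivAt (fun y => log (expSum y))
      (∑ i, weight x i • ContinuousLinearMap.proj i : (Fin n → ℝ) →L[ℝ] ℝ) x := by
  have hS : HasFDerivAt expSum
      (∑ i, exp (x i) • ContinuousLinearMap.proj i : (Fin n → ℝ) →L[ℝ] ℝ) x :=
    (HasFDerivAt.fun_sum (u := Finset.univ) fun i _ => (hasFDerivAt_apply i x).exp).const_add 1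
  simpa only [Finset.smul_sum, smul_smul, weight, div_eq_inv_mul] using hS.log (expSum_pos x).ne'

lemma weight_eq_exp_sub (x : Fin n → ℝ) (k : Fin n) :
    weight x k = exp (x k - log (expSum x)) := by
  rw [exp_sub, exp_log (expSum_pos x), weight]

lemma hasFDerivAt_weight (x : Fin n → ℝ) (k : Fin n) :
    HasFDerivAt (weight · k)
      (weight x k • ((ContinuousLinearMap.proj k : (Fin n → ℝ) →L[ℝ] ℝ)
        - ∑ i, weight x i • ContinuousLinearMap.proj i)) x := by
  have hw : (weight · k) = fun y => exp (y k - log (expSum y)) :=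
    funext fun y => weight_eq_exp_sub y k
  rw [hw, weight_eq_exp_sub x k]
  exact ((hasFDerivAt_apply k x).sub (hasFDerivAt_log_expSum x)).exp

lemma fderiv_weight_single (x : Fin n → ℝ) (j k : Fin n) :
    fderiv ℝ (weight · k) x (Pi.single j 1)
      = weight x k * ((if j = k then 1 else 0) - weight x j) := by
  simp [(hasFDerivAt_weight x k).fderiv, Pi.single_apply, eq_comm]

lemma contDiff_potential {k : WithTop ℕ∞} : ContDiff ℝ k (potential n) := by
  unfold potential expSum
  fun_prop (disch := exact fun x => (expSum_pos x).ne')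

lemma fderiv_potential_single (x : Fin n → ℝ) (j : Fin n) :
    fderiv ℝ (potential n) x (Pi.single j 1) = (n + 1) * weight x j - 1 := by
  have h : HasFDerivAt (potential n) _ x :=
    ((hasFDerivAt_log_expSum x).const_mul ((n : ℝ) + 1)).sub
      (HasFDerivAt.fun_sum (u := Finset.univ) fun i _ => hasFDerivAt_apply (𝕜 := ℝ) i x)
  simp [h.fderiv, Pi.single_apply]

lemma differentiableAt_iteratedFDeriv_potential (m : ℕ) (x : Fin n → ℝ) :
    DifferentiableAt ℝ (iteratedFDeriv ℝ m (potential n)) x :=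
  (contDiff_potential.differentiable_iteratedFDeriv (WithTop.coe_lt_top _)).differentiableAt

lemma iteratedFDeriv_two_potential (x : Fin n → ℝ) (j k : Fin n) :
    iteratedFDeriv ℝ 2 (potential n) x ![Pi.single j 1, Pi.single k 1]
      = (n + 1) * (weight x k * ((if j = k then 1 else 0) - weight x j)) := by
  rw [(differentiableAt_iteratedFDeriv_potential 1 x).iteratedFDeriv_succ_apply_left']
  simp only [iteratedFDeriv_one_apply, Fin.tail_vecCons, Matrix.cons_val_fin_one,
    Matrix.cons_val_zero, fderiv_potential_single]
  have hk := (hasFDerivAt_weight x k).differentiableAt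
  rw [fderiv_sub_const, fderiv_const_mul hk, smul_apply, fderiv_weight_single, smul_eq_mul]

lemma iteratedFDeriv_three_potential (x : Fin n → ℝ) (i j k : Fin n) :
    iteratedFDeriv ℝ 3 (potential n) x ![Pi.single i 1, Pi.single j 1, Pi.single k 1]
      = (n + 1) * (weight x k * ((if i = k then 1 else 0) - weight x i)
          * ((if j = k then 1 else 0) - weight x j)
          - weight x k * (weight x j * ((if i = j then 1 else 0) - weight x i))) := by
  rw [(differentiableAt_iteratedFDeriv_potential 2 x).iteratedFDeriv_succ_apply_left']
  simp only [Fin.tail_vecCons, Matrix.cons_val_zero, iteratedFDeriv_two_potential]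
  have hj := (hasFDerivAt_weight x j).differentiableAt
  have hk := (hasFDerivAt_weight x k).differentiableAt
  rw [fderiv_const_mul (hk.fun_mul (hj.const_sub _)), smul_apply,
    fderiv_fun_mul hk (hj.const_sub _)]
  simp only [fderiv_const_sub, add_apply, smul_apply, neg_apply, fderiv_weight_single,
    smul_eq_mul]
  ring

end SimplexPotential

open SimplexPotential

theorem stmt_7 (n : ℕ) :
    let Φ : (Fin n → ℝ) → ℝ := fun x =>
      (n + 1) * Real.log (1 + ∑ i, Real.exp (x i)) - ∑ i, x i
    let Φ₁ : (Fin n → ℝ) → Fin n → ℝ := fun x i =>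
      fderiv ℝ Φ x (Pi.single i 1)
    let Φ₂ : (Fin n → ℝ) → Fin n → Fin n → ℝ := fun x i j =>
      iteratedFDeriv ℝ 2 Φ x ![Pi.single i 1, Pi.single j 1]
    ∀ (x : Fin n → ℝ) (i j k : Fin n),
      iteratedFDeriv ℝ 3 Φ x ![Pi.single i 1, Pi.single j 1, Pi.single k 1]
        = Φ₂ x i k * (if i = j then 1 else 0)
          - Φ₂ x i k * (Φ₁ x j + 1) / (n + 1)
          - Φ₂ x j k * (Φ₁ x i + 1) / (n + 1) := by
  intro Φ Φ₁ Φ₂ x i j k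
  have hΦ : Φ = potential n := rfl
  simp only [Φ₁, Φ₂, hΦ, iteratedFDeriv_three_potential, iteratedFDeriv_two_potential,
    fderiv_potential_single]
  have hδ : ((if i = k then 1 else 0) * (if j = k then 1 else 0) : ℝ)
      = (if i = k then 1 else 0) * (if i = j then 1 else 0) := by
    split_ifs <;> simp_all
  have hw : (weight x j * if i = j then 1 else 0) = weight x i * if i = j then 1 else 0 := by
    split_ifs with h <;> simp [h]
  field_simp
  linear_combination (n + 1) * weight x k * (hδ - hw)
end

section
/- Let λ, ε, P ∈ ℝ with P ≥ 0 (P represents |∇Φ|²), 0 < ε ≤ 1, and 16λ + 2P > 0. If (3λ−1)/2 − 2ε + ([3(3λ−1)+2ε(1−ε)]P + 8[(3−ε)λ−1] + 8ε)/(16λ + 2P) ≤ 0, then λ ≤ max((1+4ε)/3, 1/(3−ε)). -/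
theorem stmt_10 (l ε P : ℝ) (hP : 0 ≤ P) (hε : 0 < ε) (hε1 : ε ≤ 1)
    (hpos : 0 < 16 * l + 2 * P)
    (h : (3 * l - 1) / 2 - 2 * ε +
      ((3 * (3 * l - 1) + 2 * ε * (1 - ε)) * P + 8 * ((3 - ε) * l - 1) + 8 * ε)
        / (16 * l + 2 * P) ≤ 0) :
    l ≤ max ((1 + 4 * ε) / 3) (1 / (3 - ε)) := by
  by_contra hc
  push_neg at hc
  rw [max_lt_iff] at hc
  obtain ⟨h1, h2⟩ := hc
  have h3 : (3 : ℝ) - ε > 0 := by linarith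
  have h1' : 3 * l - 1 > 4 * ε := by linarith
  have h2' : (3 - ε) * l > 1 := by
    rw [div_lt_iff₀ h3] at h2; linarith
  have hmul := mul_le_mul_of_nonneg_right h hpos.le
  rw [add_mul, div_mul_cancel₀ _ hpos.ne'] at hmul
  nlinarith [mul_nonneg hε.le hP, mul_nonneg hP (by linarith : (0:ℝ) ≤ 1 - ε)]
end
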